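/- If every transposition of two elements of a subset δ ⊆ D fixes the structure I under the A-local induced transformation, then every permutation π of D whose support is contained in δ satisfies σ_π^A(I) = I. -/
import Mathlib

open Classical

/-- The `A`-local structure transformation induced by a domain permutation `π`. -/
noncomputable def localTrans {D S : Type*} (A : Set (S × ℕ)) (π : Equiv.Perm D)
    (I : S → Set (List D)) : S → Set (List D) :=
  fun s => (fun l => l.mapIdx (fun i d => if (s, i) ∈ A then π d else d)) '' I s

private lemma mapIdx_congr' {D : Type*} (l : List D) (f g : ℕ → D → D)
    (h : ∀ i d, d ∈ l → f i d = g i d) : l.mapIdx f = l.mapIdx g := by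
  induction l generalizing f g with
  | nil => simp
  | cons a t ih =>
    simp only [List.mapIdx_cons]
    rw [h 0 a (by simp), ih _ _ (fun i d hd => h (i+1) d (by simp [hd]))]

private lemma mapIdx_id' {D : Type*} (l : List D) : l.mapIdx (fun _ d => d) = l := by
  induction l with
  | nil => simp
  | cons a t ih => simp [List.mapIdx_cons, ih]

private lemma localTrans_one {D S : Type*} (A : Set (S × ℕ)) (I : S → Set (List D)) :
    localTrans A 1 I = I := by
  funext s
  unfold localTrans
  have h : (fun l : List D => l.mapIdx (fun i d => if (s, i) ∈ A then (1 : Equiv.Perm D) d else d)) = id := by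
    funext l
    show l.mapIdx _ = l
    rw [mapIdx_congr' l _ (fun _ d => d) (by intros; split <;> rfl), mapIdx_id']
  rw [h, Set.image_id]

private lemma localTrans_mul {D S : Type*} (A : Set (S × ℕ)) (π ρ : Equiv.Perm D)
    (I : S → Set (List D)) :
    localTrans A (π * ρ) I = localTrans A π (localTrans A ρ I) := by
  funext s
  unfold localTrans
  rw [← Set.image_comp]
  have h : (fun l : List D => l.mapIdx (fun i d => if (s, i) ∈ A then (π * ρ) d else d))
      = ((fun l : List D => l.mapIdx (fun i d => if (s, i) ∈ A then π d else d)) ∘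
         (fun l : List D => l.mapIdx (fun i d => if (s, i) ∈ A then ρ d else d))) := by
    funext l
    show l.mapIdx _ = (l.mapIdx _).mapIdx _
    rw [List.mapIdx_mapIdx]
    apply mapIdx_congr'
    intro i d _
    by_cases h : (s, i) ∈ A <;> simp [h]
  rw [h]

private lemma apply_mem {D : Type*} (δ : Set D) (σ : Equiv.Perm D)
    (hσ : {x | σ x ≠ x} ⊆ δ) {a : D} (ha : σ a ≠ a) : σ a ∈ δ := by
  by_contra h
  have : σ (σ a) = σ a := by
    by_contra h2
    exact h (hσ h2)
  exact ha (σ.injective this)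

private lemma prod_swaps_supp {D : Type*} [DecidableEq D] (δ : Set D) :
    ∀ L : List (D × D), (∀ p ∈ L, p.1 ∈ δ ∧ p.2 ∈ δ) →
      {x | (L.map fun p => Equiv.swap p.1 p.2).prod x ≠ x} ⊆ δ := by
  intro L
  induction L with
  | nil => simp
  | cons p t ih =>
    intro hL x hx
    simp only [List.map_cons, List.prod_cons, Equiv.Perm.mul_apply, Set.mem_setOf_eq] at hx
    by_cases h : (t.map fun p => Equiv.swap p.1 p.2).prod x = x
    · rw [h] at hx
      rcases (Equiv.swap_apply_ne_self_iff.mp hx).2 with h' | h'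
      · exact h' ▸ (hL p (by simp)).1
      · exact h' ▸ (hL p (by simp)).2
    · exact ih (fun q hq => hL q (by simp [hq])) h

private lemma localTrans_prod_swaps {D S : Type*} [DecidableEq D]
    (A : Set (S × ℕ)) (I : S → Set (List D)) (δ : Set D)
    (hswap : ∀ d₁ ∈ δ, ∀ d₂ ∈ δ, localTrans A (Equiv.swap d₁ d₂) I = I) :
    ∀ L : List (D × D), (∀ p ∈ L, p.1 ∈ δ ∧ p.2 ∈ δ) →
      localTrans A (L.map fun p => Equiv.swap p.1 p.2).prod I = I := by
  intro L
  induction L with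
  | nil => intro _; simpa using localTrans_one A I
  | cons p t ih =>
    intro hL
    simp only [List.map_cons, List.prod_cons]
    rw [localTrans_mul, ih (fun q hq => hL q (by simp [hq])),
      hswap p.1 (hL p (by simp)).1 p.2 (hL p (by simp)).2]

private lemma exists_prod_swaps {D : Type*} [DecidableEq D] (δ : Set D)
    (π : Equiv.Perm D) (hπ : {x | π x ≠ x} ⊆ δ) (F : Finset D) :
    ∃ L : List (D × D), (∀ p ∈ L, p.1 ∈ δ ∧ p.2 ∈ δ) ∧
      ∀ x ∈ F, (L.map fun p => Equiv.swap p.1 p.2).prod x = π x := by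
  induction F using Finset.induction_on with
  | empty => exact ⟨[], by simp, by simp⟩
  | @insert a F ha ih =>
    obtain ⟨L, hL, hLx⟩ := ih
    set σ := (L.map fun p => Equiv.swap p.1 p.2).prod with hσdef
    by_cases hcase : σ a = π a
    · exact ⟨L, hL, fun x hx => by
        rcases Finset.mem_insert.mp hx with rfl | hx
        · exact hcase
        · exact hLx x hx⟩
    · have hσsupp := prod_swaps_supp δ L hL
      have hmem1 : σ a ∈ δ ∧ π a ∈ δ := by
        by_cases h1 : σ a = a
        · have h2 : π a ≠ a := fun h => hcase (h1.trans h.symm)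
          exact ⟨by rw [h1]; exact hπ h2, apply_mem δ π hπ h2⟩
        · have haδ : σ a ∈ δ := apply_mem δ σ hσsupp h1
          by_cases h2 : π a = a
          · exact ⟨haδ, by rw [h2]; exact hσsupp h1⟩
          · exact ⟨haδ, apply_mem δ π hπ h2⟩
      refine ⟨(σ a, π a) :: L, ?_, ?_⟩
      · intro q hq
        rcases List.mem_cons.mp hq with rfl | hq
        · exact hmem1
        · exact hL q hq
      · intro x hx
        simp only [List.map_cons, List.prod_cons, Equiv.Perm.mul_apply, ← hσdef]
        rcases Finset.mem_insert.mp hx with rfl | hx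
        · exact Equiv.swap_apply_left _ _
        · rw [hLx x hx]
          apply Equiv.swap_apply_of_ne_of_ne
          · intro h
            have hxa : x = a := σ.injective ((hLx x hx).trans h)
            exact ha (hxa ▸ hx)
          · exact fun h => ha ((π.injective h) ▸ hx)

/-- If every transposition of two elements of `δ` fixes the structure `I` under
the `A`-local induced transformation, then so does every permutation supported
on `δ`. -/
theorem interchangeable_of_swaps {D S : Type*} [DecidableEq D]
    (A : Set (S × ℕ)) (I : S → Set (List D)) (δ : Set D)
    (hswap : ∀ d₁ ∈ δ, ∀ d₂ ∈ δ, localTrans A (Equiv.swap d₁ d₂) I = I)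
    (π : Equiv.Perm D) (hπ : {x | π x ≠ x} ⊆ δ) :
    localTrans A π I = I := by
  -- one-sided inclusion for any permutation supported on δ
  have incl : ∀ ρ : Equiv.Perm D, {x | ρ x ≠ x} ⊆ δ → ∀ s, localTrans A ρ I s ⊆ I s := by
    intro ρ hρ s m hm
    obtain ⟨l, hl, rfl⟩ := hm
    obtain ⟨L, hL, hLx⟩ := exists_prod_swaps δ ρ hρ l.toFinset
    set τ := (L.map fun p => Equiv.swap p.1 p.2).prod with hτ
    have heq : l.mapIdx (fun i d => if (s, i) ∈ A then ρ d else d)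
        = l.mapIdx (fun i d => if (s, i) ∈ A then τ d else d) := by
      apply mapIdx_congr'
      intro i d hd
      rw [hLx d (List.mem_toFinset.mpr hd)]
    show l.mapIdx _ ∈ I s
    rw [heq]
    have hτI := localTrans_prod_swaps A I δ hswap L hL
    rw [← hτ] at hτI
    rw [← hτI]
    exact ⟨l, hl, rfl⟩
  have hπ' : {x | π⁻¹ x ≠ x} ⊆ δ := by
    intro x hx
    apply hπ
    simp only [Set.mem_setOf_eq] at hx ⊢
    intro h
    apply hx
    conv_lhs => rw [← h]
    simp
  funext s
  apply Set.Subset.antisymm (incl π hπ s)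
  intro l hl
  have h1 : l.mapIdx (fun i d => if (s, i) ∈ A then π⁻¹ d else d) ∈ I s :=
    incl π⁻¹ hπ' s ⟨l, hl, rfl⟩
  refine ⟨_, h1, ?_⟩
  show (List.mapIdx _ _).mapIdx _ = l
  rw [List.mapIdx_mapIdx]
  rw [mapIdx_congr' l _ (fun _ d => d) ?_, mapIdx_id']
  intro i d _
  by_cases h : (s, i) ∈ A <;> simp [h]
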